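/- Define f(x,y) = ((5x+4)/(4x+5), 3y/(4x+5)) for (x,y) in R^2 with 4x+5 != 0, and write (x',y') = f(x,y). Then: (a) (x')^2 + (y')^2 - 1 = 9(x^2 + y^2 - 1)/(4x+5)^2; (b) x' depends only on x, so f maps vertical lines to vertical lines; and (c) if x^2 + y^2 < 1 and x > -1/2, then x^2 + y^2 < (x')^2 + (y')^2 < 1, i.e., f moves every such point of the open unit disk strictly closer to the boundary circle while keeping it inside the disk. -/

import Mathlib

/-! Since `x'² + y'² - 1 = k (x² + y² - 1)` with `k = 9/(4x+5)²`, and `4x + 5 > 3` once `x > -1/2`,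
the factor `k` lies in `(0, 1)`: the defect `1 - (x² + y²)` of a point of the disk shrinks strictly
but stays positive. -/

/-- The planar map `f(x,y) = ((5x+4)/(4x+5), 3y/(4x+5))`. -/
noncomputable def fmap (p : ℝ × ℝ) : ℝ × ℝ :=
  ((5 * p.1 + 4) / (4 * p.1 + 5), 3 * p.2 / (4 * p.1 + 5))

theorem fmap_sq_add_sq_sub_one {x : ℝ} (y : ℝ) (h : 4 * x + 5 ≠ 0) :
    (fmap (x, y)).1 ^ 2 + (fmap (x, y)).2 ^ 2 - 1 =
      9 / (4 * x + 5) ^ 2 * (x ^ 2 + y ^ 2 - 1) := by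
  simp only [fmap]
  rw [div_pow, div_pow, ← add_div, div_sub_one (pow_ne_zero 2 h)]
  ring

theorem nine_div_four_mul_add_five_sq_mem_Ioo {x : ℝ} (hx : -(1 / 2) < x) :
    9 / (4 * x + 5) ^ 2 ∈ Set.Ioo 0 1 := by
  have hd : 3 < 4 * x + 5 := by linarith
  refine ⟨by positivity, (div_lt_one (by positivity)).2 ?_⟩
  nlinarith

theorem lt_and_lt_one_of_sub_one_eq_mul {r s k : ℝ} (hk : k ∈ Set.Ioo 0 1) (hr : r < 1)
    (h : s - 1 = k * (r - 1)) : r < s ∧ s < 1 := by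
  obtain ⟨hk0, hk1⟩ := hk
  constructor <;> nlinarith

/-- Writing `(x', y') = f(x, y)`:
(a) if `4x + 5 ≠ 0` then `x'² + y'² - 1 = 9(x² + y² - 1)/(4x+5)²`;
(b) `x'` depends only on `x`, so `f` maps vertical lines to vertical lines;
(c) if `x² + y² < 1` and `x > -1/2` then `x² + y² < x'² + y'² < 1`. -/
theorem stmt_19 :
    (∀ x y : ℝ, 4 * x + 5 ≠ 0 →
      (fmap (x, y)).1 ^ 2 + (fmap (x, y)).2 ^ 2 - 1 =
        9 * (x ^ 2 + y ^ 2 - 1) / (4 * x + 5) ^ 2) ∧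
    (∀ x y₁ y₂ : ℝ, (fmap (x, y₁)).1 = (fmap (x, y₂)).1) ∧
    (∀ x y : ℝ, x ^ 2 + y ^ 2 < 1 → x > -(1 / 2) →
      x ^ 2 + y ^ 2 < (fmap (x, y)).1 ^ 2 + (fmap (x, y)).2 ^ 2 ∧
      (fmap (x, y)).1 ^ 2 + (fmap (x, y)).2 ^ 2 < 1) := by
  refine ⟨fun x y h => ?_, fun x y₁ y₂ => rfl, fun x y hr hx => ?_⟩
  · rw [fmap_sq_add_sq_sub_one y h]
    ring
  · have hd : 4 * x + 5 ≠ 0 := by linarith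
    exact lt_and_lt_one_of_sub_one_eq_mul (nine_div_four_mul_add_five_sq_mem_Ioo hx) hr (fmap_sq_add_sq_sub_one y hd)
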